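/- Let s_n denote the number of independent dominating sets of the ortho-chain square cactus S_n. Then for every n ≥ 2, s_n = 2·s_{n-1}. -/

import Mathlib

/-- `S` is an independent dominating set of `G`: pairwise non-adjacent, and every
vertex outside `S` has a neighbour in `S`. -/
def IsIndepDomSet {V : Type*} (G : SimpleGraph V) (S : Finset V) : Prop :=
  (∀ v ∈ S, ∀ w ∈ S, ¬ G.Adj v w) ∧ ∀ v, v ∉ S → ∃ w ∈ S, G.Adj v w

/-- The ortho-chain square cactus `S n`: `Sum.inl i` is the cut vertex `x i`
(`0 ≤ i ≤ n`), `Sum.inr (Sum.inl k)` is `y (k+1)` and `Sum.inr (Sum.inr k)` is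
`z (k+1)` (`0 ≤ k ≤ n-1`); the `i`-th square (`1 ≤ i ≤ n`) is the four-cycle
`x (i-1) – x i – y i – z i – x (i-1)`. -/
def orthoSq (n : ℕ) : SimpleGraph (Fin (n + 1) ⊕ (Fin n ⊕ Fin n)) :=
  SimpleGraph.fromRel fun p q =>
    match p, q with
    | Sum.inl i, Sum.inl j => (i : ℕ) + 1 = (j : ℕ)
    | Sum.inl i, Sum.inr (Sum.inl k) => (i : ℕ) = (k : ℕ) + 1
    | Sum.inl i, Sum.inr (Sum.inr k) => (i : ℕ) = (k : ℕ)
    | Sum.inr (Sum.inl k), Sum.inr (Sum.inr k') => k = k'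
    | _, _ => False

/-- The number of independent dominating sets of the ortho-chain square cactus `S n`. -/
noncomputable def numIDSOrthoSq (n : ℕ) : ℕ :=
  Nat.card {S : Finset (Fin (n + 1) ⊕ (Fin n ⊕ Fin n)) // IsIndepDomSet (orthoSq n) S}

/-! In every square exactly one of the two vertices `y i`, `z i` lies in an independent
dominating set `S`: they are adjacent, and if both were missing they would have to be
dominated by `x i` and `x (i-1)`, which are adjacent too. Once these `n` binary choices are
made the cut vertices are forced: `x j ∈ S` iff neither of its neighbours `y j`, `z (j+1)`
is in `S`, since a dominating neighbour `x (j±1)` would push one of them into `S`.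
Every choice is realised, so `s n = 2 ^ n`. -/

namespace orthoSq

variable {n : ℕ}

open Classical in
/-- `b k` selects which of `y (k+1)`, `z (k+1)` is taken from the square `k+1`. -/
noncomputable def indepDomSetOfBool (b : Fin n → Bool) :
    Finset (Fin (n + 1) ⊕ (Fin n ⊕ Fin n)) :=
  Finset.univ.filter fun
    | .inl j => ∀ k : Fin n,
        ((j : ℕ) = k + 1 → b k = false) ∧ ((j : ℕ) = k → b k = true)
    | .inr (.inl k) => b k = true
    | .inr (.inr k) => b k = false

variable (b : Fin n → Bool)

@[simp] theorem inl_mem_indepDomSetOfBool (j : Fin (n + 1)) :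
    .inl j ∈ indepDomSetOfBool b ↔
      ∀ k : Fin n, ((j : ℕ) = k + 1 → b k = false) ∧ ((j : ℕ) = k → b k = true) := by
  simp [indepDomSetOfBool]

@[simp] theorem inr_inl_mem_indepDomSetOfBool (k : Fin n) :
    .inr (.inl k) ∈ indepDomSetOfBool b ↔ b k = true := by
  simp [indepDomSetOfBool]

@[simp] theorem inr_inr_mem_indepDomSetOfBool (k : Fin n) :
    .inr (.inr k) ∈ indepDomSetOfBool b ↔ b k = false := by
  simp [indepDomSetOfBool]

theorem isIndepDomSet_indepDomSetOfBool : IsIndepDomSet (orthoSq n) (indepDomSetOfBool b) := by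
  refine ⟨?_, ?_⟩
  · rintro (i | k | k) hv (j | k' | k') hw hadj <;> simp [orthoSq] at hadj hv hw
    · obtain ⟨-, h | h⟩ := hadj
      · simpa [(hv ⟨i, by omega⟩).2 rfl] using (hw ⟨i, by omega⟩).1 h.symm
      · simpa [(hw ⟨j, by omega⟩).2 rfl] using (hv ⟨j, by omega⟩).1 h.symm
    · simpa [hw] using (hv k').1 hadj
    · simpa [hw] using (hv k').2 hadj
    · simpa [hv] using (hw k).1 hadj
    · simp_all
    · simpa [hv] using (hw k).2 hadj
    · simp_all
  · rintro (j | k | k) hv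
    · simp only [inl_mem_indepDomSetOfBool, not_forall, not_and_or, Bool.not_eq_false,
        Bool.not_eq_true] at hv
      obtain ⟨k, ⟨hj, hk⟩ | ⟨hj, hk⟩⟩ := hv
      · exact ⟨.inr (.inl k), by simpa using hk, by simp [orthoSq, hj]⟩
      · exact ⟨.inr (.inr k), by simpa using hk, by simp [orthoSq, hj]⟩
    · exact ⟨.inr (.inr k), by simpa using hv, by simp [orthoSq]⟩
    · exact ⟨.inr (.inl k), by simpa using hv, by simp [orthoSq]⟩
end orthoSq

namespace IsIndepDomSet

variable {n : ℕ} {S : Finset (Fin (n + 1) ⊕ (Fin n ⊕ Fin n))}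

theorem orthoSq_inr_inr_mem_iff (hS : IsIndepDomSet (orthoSq n) S) (k : Fin n) :
    .inr (.inr k) ∈ S ↔ .inr (.inl k) ∉ S := by
  refine ⟨fun hz hy => hS.1 _ hy _ hz (by simp [orthoSq]), fun hy => ?_⟩
  by_contra hz
  obtain ⟨w, hw, hzw⟩ := hS.2 _ hz
  obtain ⟨w', hw', hyw'⟩ := hS.2 _ hy
  rcases w with i | k' | k' <;> simp [orthoSq] at hzw
  · rcases w' with i' | k'' | k'' <;> simp [orthoSq] at hyw'
    · exact hS.1 _ hw _ hw' (by simp [orthoSq]; omega)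
    · exact hz (hyw' ▸ hw')
  · exact hy (hzw ▸ hw)

theorem orthoSq_inr_inl_mem_iff (hS : IsIndepDomSet (orthoSq n) S) (k : Fin n) :
    .inr (.inl k) ∈ S ↔ .inr (.inr k) ∉ S :=
  iff_not_comm.1 (hS.orthoSq_inr_inr_mem_iff k)

theorem orthoSq_inl_mem_iff (hS : IsIndepDomSet (orthoSq n) S) (j : Fin (n + 1)) :
    .inl j ∈ S ↔ ∀ k : Fin n,
      ((j : ℕ) = k + 1 → .inr (.inl k) ∉ S) ∧ ((j : ℕ) = k → .inr (.inr k) ∉ S) := by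
  refine ⟨fun hx k => ⟨fun hj hy => hS.1 _ hx _ hy (by simp [orthoSq, hj]),
    fun hj hz => hS.1 _ hx _ hz (by simp [orthoSq, hj])⟩, fun h => ?_⟩
  by_contra hx
  obtain ⟨w, hw, hxw⟩ := hS.2 _ hx
  rcases w with i | k | k <;> simp [orthoSq] at hxw
  · obtain ⟨-, hji | hij⟩ := hxw
    · let k : Fin n := ⟨j, by omega⟩
      have hy : .inr (.inl k) ∉ S := fun hy => hS.1 _ hw _ hy (by simp [orthoSq, k]; omega)
      exact (h k).2 rfl ((hS.orthoSq_inr_inr_mem_iff k).2 hy)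
    · let k : Fin n := ⟨i, by omega⟩
      have hz : .inr (.inr k) ∉ S := fun hz => hS.1 _ hw _ hz (by simp [orthoSq, k])
      exact (h k).1 hij.symm ((hS.orthoSq_inr_inl_mem_iff k).2 hz)
  · exact (h k).1 hxw hw
  · exact (h k).2 hxw hw

theorem eq_orthoSq_indepDomSetOfBool (hS : IsIndepDomSet (orthoSq n) S) :
    S = orthoSq.indepDomSetOfBool fun k => decide (.inr (.inl k) ∈ S) := by
  ext (j | k | k)
  · simp [hS.orthoSq_inl_mem_iff, hS.orthoSq_inr_inr_mem_iff]
  · simp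
  · simp [hS.orthoSq_inr_inr_mem_iff]

end IsIndepDomSet

noncomputable def orthoSq.indepDomSetEquiv (n : ℕ) :
    (Fin n → Bool) ≃
      {S : Finset (Fin (n + 1) ⊕ (Fin n ⊕ Fin n)) // IsIndepDomSet (orthoSq n) S} where
  toFun b := ⟨orthoSq.indepDomSetOfBool b, orthoSq.isIndepDomSet_indepDomSetOfBool b⟩
  invFun S k := decide (.inr (.inl k) ∈ S.1)
  left_inv b := by simp
  right_inv S := Subtype.ext S.2.eq_orthoSq_indepDomSetOfBool.symm

theorem numIDSOrthoSq_eq_two_pow (n : ℕ) : numIDSOrthoSq n = 2 ^ n := by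
  simp [numIDSOrthoSq, ← Nat.card_congr (orthoSq.indepDomSetEquiv n)]

/-- For every `n ≥ 2`, the number of independent dominating sets of the ortho-chain
square cactus satisfies `s n = 2 · s (n-1)`. -/
theorem numIDSOrthoSq_recurrence (n : ℕ) (hn : 2 ≤ n) :
    numIDSOrthoSq n = 2 * numIDSOrthoSq (n - 1) := by
  rw [numIDSOrthoSq_eq_two_pow, numIDSOrthoSq_eq_two_pow, ← pow_succ',
    Nat.sub_add_cancel (by omega : 1 ≤ n)]
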